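/- Let P be the poset of intervals [i,j] with 1 ≤ i ≤ j ≤ 2n-1 and i+j ≤ 2n, ordered by inclusion. If an interval [i,j] with j - i = a belongs to an antichain of cardinality b in P, then b ≤ n - ⌈a/2⌉. -/

import Mathlib

/-!
In an antichain of intervals, distinct members have distinct left endpoints, and a larger left
endpoint forces a larger right endpoint. The members whose left endpoint is smaller than `i` are
therefore determined by that endpoint, which lies in `[1, i - 1]`. The members with left endpoint
at least `i` end at or after `j`, and the rounded-up midpoint `⌈(p.1 + p.2)/2⌉` is strictly
increasing along the antichain; it lies in `[⌈(i + j)/2⌉, n]`. Adding the two counts gives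
`(i - 1) + (n + 1 - ⌈(i + j)/2⌉) = n - ⌈(j - i)/2⌉`.
-/

open Finset

/-- A pair `p` encodes the interval `[p.1, p.2]`. -/
def IsIntervalAntichain (s : Set (ℕ × ℕ)) : Prop :=
  ∀ p ∈ s, ∀ q ∈ s, p ≠ q → ¬(q.1 ≤ p.1 ∧ p.2 ≤ q.2)

namespace IsIntervalAntichain

variable {s : Set (ℕ × ℕ)} (hs : IsIntervalAntichain s) {p q : ℕ × ℕ}
include hs

theorem snd_le_snd_of_fst_le (hp : p ∈ s) (hq : q ∈ s) (h : p.1 ≤ q.1) : p.2 ≤ q.2 := by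
  by_contra! hlt
  exact hs q hq p hp (fun hqp => hlt.ne (by rw [hqp])) ⟨h, hlt.le⟩

theorem fst_injOn : s.InjOn Prod.fst := fun _ hp _ hq h =>
  Prod.ext h <| le_antisymm (hs.snd_le_snd_of_fst_le hp hq h.le)
    (hs.snd_le_snd_of_fst_le hq hp h.ge)

theorem snd_lt_snd_of_fst_lt (hp : p ∈ s) (hq : q ∈ s) (h : p.1 < q.1) : p.2 < q.2 := by
  by_contra! hle
  exact hs q hq p hp (fun hqp => h.ne (by rw [hqp])) ⟨h.le, hle⟩

theorem ceil_midpoint_injOn : s.InjOn fun p => (p.1 + p.2 + 1) / 2 := by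
  intro p hp q hq h
  rcases lt_trichotomy p.1 q.1 with hlt | heq | hgt
  · have := hs.snd_lt_snd_of_fst_lt hp hq hlt
    simp only at h
    omega
  · exact hs.fst_injOn hp hq heq
  · have := hs.snd_lt_snd_of_fst_lt hq hp hgt
    simp only at h
    omega

end IsIntervalAntichain

section Card

variable {A : Finset (ℕ × ℕ)} (hA : IsIntervalAntichain A)
include hA

theorem IsIntervalAntichain.card_filter_fst_lt_le (hpos : ∀ p ∈ A, 1 ≤ p.1) (i : ℕ) :
    #(A.filter (·.1 < i)) ≤ i - 1 := by
  have hmaps : Set.MapsTo Prod.fst (A.filter (·.1 < i) : Set (ℕ × ℕ)) (Ico 1 i : Set ℕ) := by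
    intro p hp
    simp only [coe_filter, Set.mem_ofPred_eq, coe_Ico, Set.mem_Ico] at hp ⊢
    exact ⟨hpos p hp.1, hp.2⟩
  simpa using card_le_card_of_injOn Prod.fst hmaps
    (hA.fst_injOn.mono (coe_subset.mpr (filter_subset _ _)))

theorem IsIntervalAntichain.card_filter_le_fst_le {n i j : ℕ} (hmem : (i, j) ∈ A)
    (hsum : ∀ p ∈ A, p.1 + p.2 ≤ 2 * n) :
    #(A.filter (i ≤ ·.1)) ≤ n + 1 - (i + j + 1) / 2 := by
  have hmaps : Set.MapsTo (fun p : ℕ × ℕ => (p.1 + p.2 + 1) / 2)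
      (A.filter (i ≤ ·.1) : Set (ℕ × ℕ)) (Icc ((i + j + 1) / 2) n : Set ℕ) := by
    intro p hp
    simp only [coe_filter, Set.mem_ofPred_eq, coe_Icc, Set.mem_Icc] at hp ⊢
    have hj : j ≤ p.2 := hA.snd_le_snd_of_fst_le (by exact hmem) (by exact hp.1) hp.2
    have := hsum p hp.1
    omega
  simpa using card_le_card_of_injOn _ hmaps
    (hA.ceil_midpoint_injOn.mono (coe_subset.mpr (filter_subset _ _)))

theorem IsIntervalAntichain.card_le {n i j : ℕ} (hmem : (i, j) ∈ A) (hij : i ≤ j)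
    (hsub : ∀ p ∈ A, 1 ≤ p.1 ∧ p.1 + p.2 ≤ 2 * n) :
    #A ≤ n - (j - i + 1) / 2 := by
  have hleft := hA.card_filter_fst_lt_le (fun p hp => (hsub p hp).1) i
  have hright := hA.card_filter_le_fst_le hmem (fun p hp => (hsub p hp).2)
  have hsplit := card_filter_add_card_filter_not (s := A) (·.1 < i)
  simp only [not_lt] at hsplit
  have hmem_bounds := hsub _ hmem
  omega

end Card

theorem stmt_6_general (n i j a b : ℕ) (ha : j - i = a)
    (A : Finset (ℕ × ℕ))
    (hsub : ∀ p ∈ A, 1 ≤ p.1 ∧ p.1 ≤ p.2 ∧ p.2 ≤ 2 * n - 1 ∧ p.1 + p.2 ≤ 2 * n)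
    (hanti : ∀ p ∈ A, ∀ q ∈ A, p ≠ q → ¬(q.1 ≤ p.1 ∧ p.2 ≤ q.2))
    (hmem : (i, j) ∈ A) (hb : A.card = b) :
    b ≤ n - (a + 1) / 2 := by
  have hA : IsIntervalAntichain A := hanti
  subst ha hb
  exact hA.card_le hmem (hsub _ hmem).2.1 fun p hp => ⟨(hsub p hp).1, (hsub p hp).2.2.2⟩

/-- Let `P` be the poset of intervals `[i,j]` with `1 ≤ i ≤ j ≤ 2n-1` and
`i + j ≤ 2n`, ordered by inclusion.  If an interval `[i,j]` with `j - i = a` belongs to an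
antichain of cardinality `b` in `P`, then `b ≤ n - ⌈a/2⌉`.  (In ℕ, `⌈a/2⌉ = (a+1)/2`.) -/
theorem stmt_6 (n i j a b : ℕ) (hn : 2 ≤ n)
    (h1 : 1 ≤ i) (h2 : i ≤ j) (h3 : j ≤ 2 * n - 1) (h4 : i + j ≤ 2 * n) (ha : j - i = a)
    (A : Finset (ℕ × ℕ))
    (hsub : ∀ p ∈ A, 1 ≤ p.1 ∧ p.1 ≤ p.2 ∧ p.2 ≤ 2 * n - 1 ∧ p.1 + p.2 ≤ 2 * n)
    (hanti : ∀ p ∈ A, ∀ q ∈ A, p ≠ q → ¬(q.1 ≤ p.1 ∧ p.2 ≤ q.2))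
    (hmem : (i, j) ∈ A) (hb : A.card = b) :
    b ≤ n - (a + 1) / 2 :=
  stmt_6_general n i j a b ha A hsub hanti hmem hb
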